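/- arXiv:1808.04664 — 2 statements merged into one kernel-verified Lean document; each statement's English description precedes it below -/
import Mathlib

section
/- For every m ≥ 1, the complete graph K_{m+1} on m+1 vertices does not belong to the class 𝒢^(m−1); consequently 𝒢^(m) \ 𝒢^(m−1) is nonempty for every m ≥ 1. -/
namespace PincushionPaper

/-- Disjoint union of two simplicial graphs. -/
def disjUnion {V W : Type} (G : SimpleGraph V) (H : SimpleGraph W) :
    SimpleGraph (V ⊕ W) where
  Adj x y :=
    match x, y with
    | Sum.inl a, Sum.inl b => G.Adj a b
    | Sum.inr a, Sum.inr b => H.Adj a b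
    | _, _ => False
  symm := by
    constructor
    rintro (a | a) (b | b) h
    · exact G.adj_symm h
    · exact h.elim
    · exact h.elim
    · exact H.adj_symm h
  loopless := by
    constructor
    rintro (a | a) h
    · exact G.loopless.irrefl a h
    · exact H.loopless.irrefl a h

/-- The pinning `Φ_{(G,v)}(H)` of `H` to `G` at the vertex `v` of `G`:
vertex set `V ⊔ W`, edges those of `G` and `H` together with an edge
from every vertex of `H` to `v`. -/
def pinning {V W : Type} (G : SimpleGraph V) (v : V) (H : SimpleGraph W) :
    SimpleGraph (V ⊕ W) where
  Adj x y :=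
    match x, y with
    | Sum.inl a, Sum.inl b => G.Adj a b
    | Sum.inr a, Sum.inr b => H.Adj a b
    | Sum.inl a, Sum.inr _ => a = v
    | Sum.inr _, Sum.inl b => b = v
  symm := by
    constructor
    rintro (a | a) (b | b) h
    · exact G.adj_symm h
    · exact h
    · exact h
    · exact H.adj_symm h
  loopless := by
    constructor
    rintro (a | a) h
    · exact G.loopless.irrefl a h
    · exact H.loopless.irrefl a h

/-- Graphs obtained from the empty graph by repeatedly appending a graph
satisfying `P`, each appended graph being either placed as a disjoint union
with the graph built so far, or pinned to the graph built so far at one of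
its vertices; the resulting class is closed under graph isomorphism. -/
inductive BuiltFrom (P : ∀ V : Type, SimpleGraph V → Prop) :
    ∀ V : Type, SimpleGraph V → Prop
  | empty : BuiltFrom P Empty ⊥
  | disj {V W : Type} {G : SimpleGraph V} {H : SimpleGraph W} :
      BuiltFrom P V G → P W H → BuiltFrom P (V ⊕ W) (disjUnion G H)
  | pin {V W : Type} {G : SimpleGraph V} {H : SimpleGraph W} (v : V) :
      BuiltFrom P V G → P W H → BuiltFrom P (V ⊕ W) (pinning G v H)
  | iso {V W : Type} {G : SimpleGraph V} {H : SimpleGraph W} :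
      BuiltFrom P V G → (G ≃g H) → BuiltFrom P W H

/-- The classes `𝒢^(m)`: `𝒢^(0)` consists of the one-vertex graph only
(up to isomorphism), and `𝒢^(m+1)` consists of the graphs built from
graphs in `𝒢^(m)` by disjoint unions and pinnings. -/
def GClass : ℕ → ∀ V : Type, SimpleGraph V → Prop
  | 0 => fun _ G => Nonempty (G ≃g (⊥ : SimpleGraph Unit))
  | m + 1 => BuiltFrom (GClass m)

/-- The pincushion class `𝒢^(∞) = ⋃ₘ 𝒢^(m)`. -/
def Pincushion (V : Type) (G : SimpleGraph V) : Prop := ∃ m, GClass m V G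

/-- A pin of a graph: a vertex adjacent to exactly one other vertex. -/
def IsPin {V : Type} (G : SimpleGraph V) (v : V) : Prop := ∃! w, G.Adj v w

end PincushionPaper

open PincushionPaper

/-! Every graph of `𝒢^(m)` is `K_{m+2}`-free. Indeed, a clique in a disjoint union lies on one
side, and a clique of `Φ_{(Γ,v)}(Γ')` that meets `Γ'` meets `Γ` at most in `v`; so appending
`K_k`-free graphs never creates a `K_{k+1}`. Conversely `K_{m+2}` is `K_{m+1}` pinned to `K_1`,
and `K_1` lies in every `𝒢^(m)`, so `K_{m+1} ∈ 𝒢^(m)` by induction. -/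

open SimpleGraph Finset

namespace PincushionPaper

theorem cliqueFree_succ_of_sum {V W : Type*} {G : SimpleGraph (V ⊕ W)} {k : ℕ}
    (hl : (G.comap Sum.inl).CliqueFree (k + 1)) (hr : (G.comap Sum.inr).CliqueFree k)
    (hcross : ∀ a a' b, G.Adj (.inl a) (.inr b) → G.Adj (.inl a') (.inr b) → a = a') :
    G.CliqueFree (k + 1) := by
  intro s hs
  have hcl : (G.comap Sum.inl).IsClique (s.toLeft : Set V) := fun a ha a' ha' h =>
    hs.isClique (mem_toLeft.1 ha) (mem_toLeft.1 ha') (Sum.inl_injective.ne h)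
  have hcr : (G.comap Sum.inr).IsClique (s.toRight : Set W) := fun b hb b' hb' h =>
    hs.isClique (mem_toRight.1 hb) (mem_toRight.1 hb') (Sum.inr_injective.ne h)
  have hcard : #s.toLeft + #s.toRight = k + 1 := card_toLeft_add_card_toRight.trans hs.card_eq
  rcases s.toRight.eq_empty_or_nonempty with hR | ⟨b, hb⟩
  · rw [hR, card_empty, add_zero] at hcard
    exact hl _ ⟨hcl, hcard⟩
  · have hL : #s.toLeft ≤ 1 := card_le_one.2 fun a ha a' ha' =>
      hcross a a' b (hs.isClique (mem_toLeft.1 ha) (mem_toRight.1 hb) Sum.inl_ne_inr)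
        (hs.isClique (mem_toLeft.1 ha') (mem_toRight.1 hb) Sum.inl_ne_inr)
    obtain ⟨t, hts, ht⟩ := exists_subset_card_eq (show k ≤ #s.toRight by omega)
    exact hr t ⟨hcr.subset hts, ht⟩

theorem BuiltFrom.cliqueFree {P : ∀ V : Type, SimpleGraph V → Prop} {k : ℕ}
    (hP : ∀ W H, P W H → H.CliqueFree k) {V : Type} {G : SimpleGraph V}
    (h : BuiltFrom P V G) : G.CliqueFree (k + 1) := by
  induction h with
  | empty => exact cliqueFree_of_card_lt (by simp)
  | disj _ hH ih => exact cliqueFree_succ_of_sum ih (hP _ _ hH) fun _ _ _ h => h.elim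
  | pin _ _ hH ih =>
    exact cliqueFree_succ_of_sum ih (hP _ _ hH) fun _ _ _ h h' => Eq.trans h (Eq.symm h')
  | iso _ e ih => exact ih.comap e.symm.toEmbedding.isContained

theorem GClass.cliqueFree : ∀ {m : ℕ} {V : Type} {G : SimpleGraph V},
    GClass m V G → G.CliqueFree (m + 2)
  | 0, _, _, ⟨e⟩ => (cliqueFree_bot le_rfl).comap e.toEmbedding.isContained
  | _ + 1, _, _, h => BuiltFrom.cliqueFree (fun _ _ => GClass.cliqueFree) h

theorem BuiltFrom.of_mem {P : ∀ V : Type, SimpleGraph V → Prop} {V : Type}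
    {G : SimpleGraph V} (h : P V G) : BuiltFrom P V G :=
  (BuiltFrom.empty.disj h).iso ⟨Equiv.emptySum Empty V, by
    rintro (a | a) (b | b) <;> first | exact a.elim | exact b.elim | rfl⟩

theorem GClass.succ {m : ℕ} {V : Type} {G : SimpleGraph V} (h : GClass m V G) :
    GClass (m + 1) V G :=
  BuiltFrom.of_mem h

theorem GClass.unit : ∀ m : ℕ, GClass m Unit ⊥
  | 0 => ⟨Iso.refl⟩
  | m + 1 => (GClass.unit m).succ

theorem pinning_unit_top (W : Type) :
    pinning (⊥ : SimpleGraph Unit) () (⊤ : SimpleGraph W) = ⊤ := by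
  ext (⟨⟩ | a) (⟨⟩ | b) <;> simp [pinning]

theorem completeGraph_mem_gclass : ∀ m : ℕ, GClass m (Fin (m + 1)) ⊤
  | 0 => ⟨⟨Equiv.ofUnique (Fin 1) Unit, fun {a b : Fin 1} => by simp [Subsingleton.elim a b]⟩⟩
  | m + 1 => by
    have h := BuiltFrom.pin () (GClass.unit (m + 1)) (completeGraph_mem_gclass m)
    rw [pinning_unit_top] at h
    exact h.iso (Iso.completeGraph (Fintype.equivFinOfCardEq (by simp [add_comm])))

end PincushionPaper

/-- For every `m ≥ 1`, the complete graph `K_{m+1}` does not belong to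
`𝒢^(m-1)`; consequently `𝒢^(m) \ 𝒢^(m-1)` is nonempty. -/
theorem complete_not_mem_gclass_pred (m : ℕ) (hm : 1 ≤ m) :
    ¬ GClass (m - 1) (Fin (m + 1)) ⊤ ∧
      ∃ (V : Type) (G : SimpleGraph V), GClass m V G ∧ ¬ GClass (m - 1) V G := by
  obtain ⟨k, rfl⟩ : ∃ k, m = k + 1 := ⟨m - 1, by omega⟩
  rw [Nat.add_sub_cancel]
  have hK : ¬ GClass k (Fin (k + 2)) ⊤ := fun h =>
    (IsContained.refl _).not_cliqueFree h.cliqueFree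
  exact ⟨hK, _, _, completeGraph_mem_gclass (k + 1), hK⟩
end

section
/- Every word over the vertex set of a simplicial graph Γ is equivalent, under the equivalence relation ∼ generated by deleting one of two equal adjacent letters and swapping adjacent letters joined by an edge of Γ, to a reduced word. -/
namespace GraphWords

/-- One-step moves on words over the vertex set of a simplicial graph `G`:
deleting one of two equal adjacent letters, and swapping two adjacent
letters joined by an edge of `G`. -/
inductive WordStep {V : Type} (G : SimpleGraph V) : List V → List V → Prop
  | delete (p s : List V) (v : V) :
      WordStep G (p ++ v :: v :: s) (p ++ v :: s)
  | swap (p s : List V) (v w : V) (h : G.Adj v w) :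
      WordStep G (p ++ v :: w :: s) (p ++ w :: v :: s)

/-- The equivalence relation `∼` on words generated by the above moves. -/
def WordEquiv {V : Type} (G : SimpleGraph V) : List V → List V → Prop :=
  Relation.EqvGen (WordStep G)

/-- A word `(v_1, …, v_n)` is reduced if whenever `v_k = v_l` with `k < l`
there is a `p` with `k < p < l` such that `(v_k, v_p) ∉ EΓ`.
(In particular the empty word is reduced.) -/
def Reduced {V : Type} (G : SimpleGraph V) (w : List V) : Prop :=
  ∀ k l : Fin w.length, k < l → w.get k = w.get l →
    ∃ p : Fin w.length, k < p ∧ p < l ∧ ¬ G.Adj (w.get k) (w.get p)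

end GraphWords

/-!
If a word is not reduced, it has the shape `a v b v c` where `v` is adjacent to every letter
of `b`. Then `v` commutes past `b`, the two copies of `v` become adjacent and one of them is
deleted. This strictly shortens the word, so iterating terminates at a reduced word.
-/

namespace GraphWords

variable {V : Type} {G : SimpleGraph V}

theorem WordEquiv.refl (w : List V) : WordEquiv G w w :=
  Relation.EqvGen.refl w

theorem WordEquiv.trans {u v w : List V} (h₁ : WordEquiv G u v) (h₂ : WordEquiv G v w) :
    WordEquiv G u w :=
  Relation.EqvGen.trans _ _ _ h₁ h₂

theorem WordStep.wordEquiv {u v : List V} (h : WordStep G u v) : WordEquiv G u v :=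
  Relation.EqvGen.rel _ _ h

theorem wordEquiv_append_cons_of_forall_adj {v : V} {b : List V} (hb : ∀ x ∈ b, G.Adj v x)
    (p s : List V) : WordEquiv G (p ++ b ++ v :: s) (p ++ v :: (b ++ s)) := by
  induction b generalizing p with
  | nil => simpa using WordEquiv.refl (p ++ v :: s)
  | cons x b ih =>
    have hxb : WordEquiv G (p ++ x :: b ++ v :: s) (p ++ x :: v :: (b ++ s)) := by
      simpa using ih (fun y hy => hb y (List.mem_cons_of_mem x hy)) (p ++ [x])
    exact hxb.trans
      (WordStep.swap p (b ++ s) x v (hb x List.mem_cons_self).symm).wordEquiv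

theorem wordEquiv_cancel_of_forall_adj {v : V} {b : List V} (hb : ∀ x ∈ b, G.Adj v x)
    (a c : List V) : WordEquiv G (a ++ v :: (b ++ v :: c)) (a ++ v :: (b ++ c)) := by
  have hmove : WordEquiv G (a ++ v :: (b ++ v :: c)) (a ++ v :: v :: (b ++ c)) := by
    simpa using wordEquiv_append_cons_of_forall_adj hb (a ++ [v]) c
  exact hmove.trans (WordStep.delete a (b ++ c) v).wordEquiv

theorem exists_eq_append_cons_append_cons_of_not_reduced {w : List V} (h : ¬ Reduced G w) :
    ∃ a b c : List V, ∃ v : V, w = a ++ v :: (b ++ v :: c) ∧ ∀ x ∈ b, G.Adj v x := by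
  simp only [Reduced, not_forall, not_exists, not_and, not_not] at h
  obtain ⟨⟨k, hk⟩, ⟨l, hl⟩, hkl, heq, hadj⟩ := h
  simp only [Fin.mk_lt_mk, List.get_eq_getElem] at hkl heq hadj
  set t := w.drop (k + 1)
  set m := l - k - 1
  have hm : m < t.length := by simp only [t, m, List.length_drop]; omega
  have htm : t[m] = w[k] := by simp only [t, m, List.getElem_drop, heq]; congr 1; omega
  refine ⟨w.take k, t.take m, t.drop (m + 1), w[k], ?_, ?_⟩
  · have hw : w = w.take k ++ w[k] :: t := by simp [t]
    have ht : t = t.take m ++ t[m] :: t.drop (m + 1) := by simp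
    rwa [ht, htm] at hw
  · intro x hx
    obtain ⟨i, hi, rfl⟩ := List.mem_take_iff_getElem.mp hx
    have hki : k < k + 1 + i := by omega
    have hil : k + 1 + i < l := by omega
    simpa only [t, List.getElem_drop] using hadj ⟨k + 1 + i, by omega⟩ hki hil

theorem exists_wordEquiv_length_lt_of_not_reduced {w : List V} (h : ¬ Reduced G w) :
    ∃ w' : List V, WordEquiv G w w' ∧ w'.length < w.length := by
  obtain ⟨a, b, c, v, rfl, hb⟩ := exists_eq_append_cons_append_cons_of_not_reduced h
  exact ⟨a ++ v :: (b ++ c), wordEquiv_cancel_of_forall_adj hb a c, by simp⟩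

end GraphWords

open GraphWords

/-- Every word over the vertex set of a simplicial graph is equivalent,
under the equivalence relation `∼`, to a reduced word. -/
theorem exists_reduced_word {V : Type} (G : SimpleGraph V) (w : List V) :
    ∃ w' : List V, WordEquiv G w w' ∧ Reduced G w' := by
  by_cases hw : Reduced G w
  · exact ⟨w, WordEquiv.refl w, hw⟩
  obtain ⟨u, hwu, hlt⟩ := exists_wordEquiv_length_lt_of_not_reduced hw
  obtain ⟨w', huw', hw'⟩ := exists_reduced_word G u
  exact ⟨w', hwu.trans huw', hw'⟩
termination_by w.length
end
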